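/- Let h : ℝ → ℝ be continuous, and let D ⊂ ℝ be a set whose complement is covered by countably many open intervals on each of which h is C^{1+ε} (derivative exists and is ε-Hölder) with uniform constants. Suppose ℝ is covered by two families of open intervals 𝒰 and 𝒱, each with uniform C^{1+ε} bounds for h, such that every point of ℝ lies in the interior of an interval of 𝒰 or of 𝒱, and that the endpoints of intervals in 𝒰 are disjoint from the endpoints of intervals in 𝒱. Then h is C^{1+ε} on all of ℝ, with derivative Hölder continuous of exponent ε. -/
import Mathlib


theorem stmt_19 (h : ℝ → ℝ) (hcont : Continuous h) (ε : ℝ) (hε0 : 0 < ε) (hε1 : ε ≤ 1)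
    (𝒰 𝒱 : Set (Set ℝ)) (C : ℝ) (hC : 0 ≤ C)
    (hopen : ∀ I ∈ 𝒰 ∪ 𝒱, IsOpen I ∧ I.OrdConnected)
    (hdiff : ∀ I ∈ 𝒰 ∪ 𝒱, ∀ x ∈ I, DifferentiableAt ℝ h x)
    (hHolder : ∀ I ∈ 𝒰 ∪ 𝒱, ∀ x ∈ I, ∀ y ∈ I,
      |deriv h x - deriv h y| ≤ C * |x - y| ^ ε)
    (hcover : ∀ x : ℝ, ∃ I ∈ 𝒰 ∪ 𝒱, I ∈ nhds x) :
    Differentiable ℝ h ∧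
    ∀ K : Set ℝ, IsCompact K → ∃ C' ≥ (0 : ℝ), ∀ x ∈ K, ∀ y ∈ K,
      |deriv h x - deriv h y| ≤ C' * |x - y| ^ ε := by
  have hdiff' : Differentiable ℝ h := fun x => by
    obtain ⟨I, hI, hIx⟩ := hcover x
    exact hdiff I hI x (mem_of_mem_nhds hIx)
  refine ⟨hdiff', ?_⟩
  -- deriv h is continuous
  have hder_cont : Continuous (deriv h) := by
    rw [continuous_iff_continuousAt]
    intro x
    rw [ContinuousAt, tendsto_iff_dist_tendsto_zero]
    obtain ⟨I, hI, hIx⟩ := hcover x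
    have hxI : x ∈ I := mem_of_mem_nhds hIx
    have hub : ∀ᶠ y in nhds x, dist (deriv h y) (deriv h x) ≤ C * |y - x| ^ ε := by
      filter_upwards [hIx] with y hy
      rw [Real.dist_eq]
      exact hHolder I hI y hy x hxI
    have t1 : Filter.Tendsto (fun y : ℝ => |y - x|) (nhds x) (nhds 0) := by
      have : Continuous (fun y : ℝ => |y - x|) := (continuous_id.sub continuous_const).abs
      simpa using this.tendsto x
    have t2 : Filter.Tendsto (fun y : ℝ => C * |y - x| ^ ε) (nhds x) (nhds 0) := by
      have := (t1.rpow_const (Or.inr hε0.le)).const_mul C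
      simpa [Real.zero_rpow hε0.ne'] using this
    exact squeeze_zero' (Filter.Eventually.of_forall fun y => dist_nonneg) hub t2
  intro K hK
  -- bound of deriv h on K
  obtain ⟨M, hM⟩ := hK.exists_bound_of_continuousOn hder_cont.continuousOn
  set M' : ℝ := max M 0 with hM'def
  have hM'0 : 0 ≤ M' := le_max_right _ _
  -- Lebesgue number
  have hKcov : K ⊆ ⋃₀ (𝒰 ∪ 𝒱) := by
    intro x _
    obtain ⟨I, hI, hIx⟩ := hcover x
    exact ⟨I, hI, mem_of_mem_nhds hIx⟩
  obtain ⟨δ, hδ0, hδ⟩ := lebesgue_number_lemma_of_metric_sUnion hK (fun I hI => (hopen I hI).1) hKcov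
  refine ⟨C + 2 * M' / δ ^ ε, by positivity, ?_⟩
  intro x hx y hy
  rcases lt_or_ge (dist y x) δ with hlt | hge
  · obtain ⟨I, hI, hball⟩ := hδ x hx
    have hxI : x ∈ I := hball (Metric.mem_ball_self hδ0)
    have hyI : y ∈ I := hball hlt
    calc |deriv h x - deriv h y| ≤ C * |x - y| ^ ε := hHolder I hI x hxI y hyI
      _ ≤ (C + 2 * M' / δ ^ ε) * |x - y| ^ ε := by
          apply mul_le_mul_of_nonneg_right _ (Real.rpow_nonneg (abs_nonneg _) _)
          have : 0 ≤ 2 * M' / δ ^ ε := by positivity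
          linarith
  · have hδxy : δ ^ ε ≤ |x - y| ^ ε := by
      apply Real.rpow_le_rpow hδ0.le _ hε0.le
      rw [abs_sub_comm]
      simpa [Real.dist_eq] using hge
    have hb : |deriv h x - deriv h y| ≤ 2 * M' := by
      have h1 : |deriv h x| ≤ M' := le_trans (hM x hx) (le_max_left _ _)
      have h2 : |deriv h y| ≤ M' := le_trans (hM y hy) (le_max_left _ _)
      calc |deriv h x - deriv h y| ≤ |deriv h x| + |deriv h y| := abs_sub _ _
        _ ≤ 2 * M' := by linarith
    have hδε : 0 < δ ^ ε := Real.rpow_pos_of_pos hδ0 ε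
    calc |deriv h x - deriv h y| ≤ 2 * M' := hb
      _ = (2 * M' / δ ^ ε) * δ ^ ε := by field_simp
      _ ≤ (2 * M' / δ ^ ε) * |x - y| ^ ε := by
          apply mul_le_mul_of_nonneg_left hδxy (by positivity)
      _ ≤ (C + 2 * M' / δ ^ ε) * |x - y| ^ ε := by
          apply mul_le_mul_of_nonneg_right _ (Real.rpow_nonneg (abs_nonneg _) _)
          linarith
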